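/- For every integer n ≥ 1, the polynomial identity x · P_{2n−1}(x) = Σ_{j=1}^{n} 2^{2n−2j} (2j−1)! U(n,j) x^j (1−x)^{n−j} holds in ℤ[x]. -/

import Mathlib

open Polynomial Finset

/-- The value (in `{0,…,n-1}`) of the permutation `π` at the 0-indexed position `j`
(junk value `0` outside the range). -/
def permVal {n : ℕ} (π : Equiv.Perm (Fin n)) (j : ℕ) : ℕ :=
  if h : j < n then ((π ⟨j, h⟩ : Fin n) : ℕ) else 0

/-- The number of interior peaks of `π ∈ S_n`: 1-indexed positions `i ∈ {2,…,n-1}`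
(0-indexed `i ∈ {1,…,n-2}`) with `π(i-1) < π(i) > π(i+1)`. -/
def pk (n : ℕ) (π : Equiv.Perm (Fin n)) : ℕ :=
  ((Finset.Ioo 0 (n - 1)).filter (fun i =>
    permVal π (i - 1) < permVal π i ∧ permVal π (i + 1) < permVal π i)).card

/-- The peak polynomial `P_n(x) = Σ_{π ∈ S_n} x^{pk(π)}`. -/
noncomputable def Ppoly (n : ℕ) : Polynomial ℤ :=
  ∑ π : Equiv.Perm (Fin n), Polynomial.X ^ pk n π

/-- The central factorial numbers of even indices `U(n,k)`, defined by the recurrence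
`U(n,k) = U(n-1,k-1) + k^2 * U(n-1,k)` with `U(1,1) = 1` and `U(1,k) = 0` for `k ≠ 1`. -/
def U : ℕ → ℕ → ℤ
  | 0, _ => 0
  | 1, k => if k = 1 then 1 else 0
  | _ + 2, 0 => 0
  | n + 2, k + 1 => U (n + 1) k + ((k : ℤ) + 1) ^ 2 * U (n + 1) (k + 1)

/- ### U lemmas -/

lemma U_zero_right (n : ℕ) : U n 0 = 0 := by
  match n with
  | 0 => rfl
  | 1 => rfl
  | n + 2 => rfl

lemma U_rec (n k : ℕ) (hn : 1 ≤ n) : U (n+1) (k+1) = U n k + ((k:ℤ)+1)^2 * U n (k+1) := by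
  match n, hn with
  | n + 1, _ => rfl

lemma U_eq_zero (n k : ℕ) (h : n < k) : U n k = 0 := by
  induction n generalizing k with
  | zero => rfl
  | succ n ih =>
    match n, k with
    | 0, k =>
      have : k ≠ 1 := by omega
      simp [U, this]
    | n + 1, 0 => exact absurd h (by omega)
    | n + 1, k + 1 =>
      rw [U_rec _ _ (by omega), ih _ (by omega), ih _ (by omega)]
      ring

/- ### The basis sums -/

noncomputable def S (n : ℕ) (f : ℕ → ℤ) : Polynomial ℤ :=
  ∑ j ∈ range (n+1), C (f j) * X ^ j * (1 - X) ^ (n - j)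

lemma S_add (n : ℕ) (f g : ℕ → ℤ) : S n (fun j => f j + g j) = S n f + S n g := by
  simp [S, ← sum_add_distrib, add_mul]

lemma S_mulX (n : ℕ) (f : ℕ → ℤ) (h0 : f 0 = 0) :
    X * S n f = S (n+1) (fun j => f (j-1)) := by
  rw [S, S, Finset.mul_sum, Finset.sum_range_succ' (fun j => C (f (j-1)) * X ^ j * (1 - X) ^ (n + 1 - j))]
  simp only [Nat.add_sub_cancel, Nat.sub_zero, pow_zero, h0, map_zero, zero_mul, add_zero]
  refine Finset.sum_congr rfl fun j hj => ?_
  simp only [Finset.mem_range] at hj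
  have : n + 1 - (j + 1) = n - j := by omega
  rw [this]
  ring

lemma S_mulOneSubX (n : ℕ) (f : ℕ → ℤ) (htop : f (n+1) = 0) :
    (1 - X) * S n f = S (n+1) f := by
  rw [S, S, Finset.mul_sum,
    Finset.sum_range_succ (fun j => C (f j) * X ^ j * (1 - X) ^ (n + 1 - j)), htop]
  simp only [map_zero, zero_mul, add_zero]
  refine Finset.sum_congr rfl fun j hj => ?_
  simp only [Finset.mem_range] at hj
  have : n + 1 - j = (n - j) + 1 := by omega
  rw [this, pow_succ]
  ring

lemma S_Cmul (n : ℕ) (a : ℤ) (f : ℕ → ℤ) :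
    C a * S n f = S n (fun j => a * f j) := by
  rw [S, S, Finset.mul_sum]
  refine Finset.sum_congr rfl fun j hj => ?_
  rw [map_mul]
  ring

lemma deriv_term (a : ℤ) (j k : ℕ) :
    X * (1 - X) * derivative (C a * X ^ j * (1 - X) ^ k) =
      C ((j:ℤ) * a) * X ^ j * (1 - X) ^ (k+1) - C ((k:ℤ) * a) * X ^ (j+1) * (1 - X) ^ k := by
  cases j with
  | zero =>
    cases k with
    | zero => simp
    | succ k =>
      simp only [derivative_mul, derivative_C, derivative_pow, derivative_X, derivative_sub,
        derivative_one, map_mul, map_add, map_one, map_natCast]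
      simp only [Nat.add_sub_cancel, pow_succ, pow_zero, Nat.cast_add, Nat.cast_one, Nat.cast_zero]
      push_cast
      ring
  | succ j =>
    cases k with
    | zero =>
      simp only [derivative_mul, derivative_C, derivative_pow, derivative_X, derivative_sub,
        derivative_one, map_mul, map_add, map_one, map_natCast]
      simp only [Nat.add_sub_cancel, pow_succ, pow_zero, Nat.cast_add, Nat.cast_one, Nat.cast_zero]
      push_cast
      ring
    | succ k =>
      simp only [derivative_mul, derivative_C, derivative_pow, derivative_X, derivative_sub,
        derivative_one, map_mul, map_add, map_one, map_natCast]
      simp only [Nat.add_sub_cancel, pow_succ, pow_zero, Nat.cast_add, Nat.cast_one, Nat.cast_zero]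
      push_cast
      ring

lemma S_pad (n : ℕ) (f : ℕ → ℤ) (h0 : f 0 = 0) (htop : f (n+1) = 0) :
    S n f = S (n+1) (fun j => f j + f (j-1)) := by
  rw [S_add, ← S_mulX n f h0, ← S_mulOneSubX n f htop]
  ring

lemma S_deriv (n : ℕ) (f : ℕ → ℤ) (h0 : f 0 = 0) (htop : f (n+1) = 0) :
    X * (1 - X) * derivative (S n f) =
      S (n+1) (fun j => (j:ℤ) * f j - ((n:ℤ) + 1 - (j:ℤ)) * f (j-1)) := by
  rw [S, derivative_sum, Finset.mul_sum]
  rw [Finset.sum_congr rfl (fun j (hj : j ∈ range (n+1)) => deriv_term (f j) j (n - j))]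
  rw [Finset.sum_sub_distrib]
  have hA : ∑ j ∈ range (n+1), C ((j:ℤ) * f j) * X ^ j * (1 - X) ^ (n - j + 1) =
      ∑ j ∈ range (n+2), C ((j:ℤ) * f j) * X ^ j * (1 - X) ^ (n + 1 - j) := by
    rw [Finset.sum_range_succ (fun j => C ((j:ℤ) * f j) * X ^ j * (1 - X) ^ (n + 1 - j))]
    rw [htop]
    simp only [mul_zero, map_zero, zero_mul, add_zero]
    refine Finset.sum_congr rfl fun j hj => ?_
    simp only [Finset.mem_range] at hj
    have : n - j + 1 = n + 1 - j := by omega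
    rw [this]
  have hB : ∑ j ∈ range (n+1), C (((n - j : ℕ):ℤ) * f j) * X ^ (j+1) * (1 - X) ^ (n - j) =
      ∑ j ∈ range (n+2), C (((n:ℤ) + 1 - (j:ℤ)) * f (j-1)) * X ^ j * (1 - X) ^ (n + 1 - j) := by
    rw [Finset.sum_range_succ' (fun j => C (((n:ℤ) + 1 - (j:ℤ)) * f (j-1)) * X ^ j * (1 - X) ^ (n + 1 - j))]
    simp only [Nat.zero_sub, Nat.cast_zero, sub_zero, h0, mul_zero, map_zero, zero_mul, add_zero]
    refine Finset.sum_congr rfl fun j hj => ?_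
    simp only [Finset.mem_range] at hj
    have h1 : n + 1 - (j + 1) = n - j := by omega
    have h2 : (j + 1) - 1 = j := by omega
    rw [h1, h2]
    have h3 : ((n:ℤ) + 1 - ((j:ℤ) + 1)) = ((n - j : ℕ):ℤ) := by
      have := Nat.cast_sub (le_of_lt hj) (R := ℤ)
      omega
    push_cast
    rw [h3]
  rw [hA, hB, S, ← Finset.sum_sub_distrib]
  refine Finset.sum_congr rfl fun j hj => ?_
  rw [map_sub]
  ring

def stepC (m n : ℕ) (f : ℕ → ℤ) : ℕ → ℤ :=
  fun j => (m:ℤ) * f (j-1) + 2*((j:ℤ) * f j - ((n:ℤ)+1-(j:ℤ)) * f (j-1))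

lemma S_step (m n : ℕ) (f : ℕ → ℤ) (h0 : f 0 = 0) (htop : f (n+1) = 0) :
    C (m:ℤ) * X * S n f + C 2 * (X * (1 - X) * derivative (S n f)) =
      S (n+1) (stepC m n f) := by
  rw [S_deriv n f h0 htop, mul_assoc, S_mulX n f h0]
  rw [S_Cmul, S_Cmul, ← S_add]
  rfl


/- ### The coefficient functions -/

def aF (n : ℕ) : ℕ → ℤ :=
  fun j => 2^(2*n-2*j) * (((2*j-1).factorial : ℕ) : ℤ) * U n j

lemma aF_zero (n : ℕ) : aF n 0 = 0 := by simp [aF, U_zero_right]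

lemma aF_top (n k : ℕ) (h : n < k) : aF n k = 0 := by simp [aF, U_eq_zero n k h]

lemma key_coeff (n : ℕ) (hn : 1 ≤ n) (j : ℕ) :
    stepC (2*n+1) (n+1) (stepC (2*n) n (aF n)) j = aF (n+1) j + aF (n+1) (j-1) := by
  match j with
  | 0 =>
    simp [stepC, aF_zero]
  | 1 =>
    obtain ⟨m, rfl⟩ : ∃ m, n = m + 1 := ⟨n-1, by omega⟩
    have h1 : U (m+1+1) 1 = U (m+1) 0 + ((0:ℤ)+1)^2 * U (m+1) 1 := U_rec (m+1) 0 (by omega)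
    have e1 : 2*(m+1) - 2*1 = 2*m := by omega
    have e2 : 2*(m+1+1) - 2*1 = 2*m+2 := by omega
    simp only [stepC, aF, e1, e2, h1, U_zero_right]
    norm_num [pow_add]
    simp [U_zero_right]
    ring
  | (j+2) =>
    have r1 : j+2-1 = j+1 := rfl
    have r2 : j+1-1 = j := rfl
    have hfact : ∀ (k m : ℕ), (((2*k+1).factorial : ℕ) : ℤ) * U m k =
        (2*(k:ℤ)+1) * (2*k) * (((2*k-1).factorial : ℕ) : ℤ) * U m k := by
      intro k m
      cases k with
      | zero => simp [U_zero_right]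
      | succ i =>
        rw [show 2*(i+1)-1 = 2*i+1 from by omega, show 2*(i+1)+1 = (2*i+1)+1+1 from by omega,
          Nat.factorial_succ, Nat.factorial_succ]
        push_cast
        ring
    have hcb : ∀ k : ℕ, (((2*k+3).factorial : ℕ) : ℤ) =
        (2*(k:ℤ)+3) * (2*k+2) * (((2*k+1).factorial : ℕ) : ℤ) := by
      intro k
      rw [show 2*k+3 = (2*k+1)+1+1 from by omega, Nat.factorial_succ, Nat.factorial_succ]
      push_cast
      ring
    rcases Nat.lt_or_ge (j+2) (n+1) with hlt | hge
    · -- j + 2 ≤ n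
      obtain ⟨t, rfl⟩ : ∃ t, n = j+2+t := ⟨n-(j+2), by omega⟩
      have A2 : aF (j+2+t) (j+2) =
          2^(2*t) * (((2*j+3).factorial : ℕ) : ℤ) * U (j+2+t) (j+2) := by
        simp only [aF]
        rw [show 2*(j+2+t)-2*(j+2) = 2*t from by omega, show 2*(j+2)-1 = 2*j+3 from by omega]
      have A1 : aF (j+2+t) (j+1) =
          4 * 2^(2*t) * (((2*j+1).factorial : ℕ) : ℤ) * U (j+2+t) (j+1) := by
        simp only [aF]
        rw [show 2*(j+2+t)-2*(j+1) = 2*t+2 from by omega, show 2*(j+1)-1 = 2*j+1 from by omega,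
          pow_add]
        ring
      have A0 : aF (j+2+t) j =
          16 * 2^(2*t) * (((2*j-1).factorial : ℕ) : ℤ) * U (j+2+t) j := by
        simp only [aF]
        rw [show 2*(j+2+t)-2*j = 2*t+4 from by omega, pow_add]
        ring
      have R2 : aF (j+2+t+1) (j+2) =
          4 * 2^(2*t) * (((2*j+3).factorial : ℕ) : ℤ) * U (j+2+t+1) (j+2) := by
        simp only [aF]
        rw [show 2*(j+2+t+1)-2*(j+2) = 2*t+2 from by omega, show 2*(j+2)-1 = 2*j+3 from by omega,
          pow_add]
        ring
      have R1 : aF (j+2+t+1) (j+1) =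
          16 * 2^(2*t) * (((2*j+1).factorial : ℕ) : ℤ) * U (j+2+t+1) (j+1) := by
        simp only [aF]
        rw [show 2*(j+2+t+1)-2*(j+1) = 2*t+4 from by omega, show 2*(j+1)-1 = 2*j+1 from by omega,
          pow_add]
        ring
      have hU2 : U (j+2+t+1) (j+2) = U (j+2+t) (j+1) + ((j:ℤ)+1+1)^2 * U (j+2+t) (j+2) :=
        U_rec (j+2+t) (j+1) (by omega)
      have hU1 : U (j+2+t+1) (j+1) = U (j+2+t) j + ((j:ℤ)+1)^2 * U (j+2+t) (j+1) :=
        U_rec (j+2+t) j (by omega)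
      have hba := hfact j (j+2+t)
      simp only [stepC, r1, r2]
      rw [A2, A1, A0, R2, R1, hU2, hU1, hcb j]
      push_cast at hba ⊢
      linear_combination (-16 * (2:ℤ)^(2*t)) * hba
    · rcases (by omega : j+2 = n+1 ∨ j+2 = n+2 ∨ n+2 < j+2) with h | h | h
      · -- j + 2 = n + 1, n = j + 1
        obtain rfl : n = j+1 := by omega
        have A2 : aF (j+1) (j+2) = 0 := aF_top _ _ (by omega)
        have A1 : aF (j+1) (j+1) = (((2*j+1).factorial : ℕ) : ℤ) * U (j+1) (j+1) := by
          simp only [aF]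
          rw [show 2*(j+1)-2*(j+1) = 0 from by omega, show 2*(j+1)-1 = 2*j+1 from by omega]
          ring
        have A0 : aF (j+1) j =
            4 * (((2*j-1).factorial : ℕ) : ℤ) * U (j+1) j := by
          simp only [aF]
          rw [show 2*(j+1)-2*j = 2 from by omega]
          ring
        have R2 : aF (j+1+1) (j+2) = (((2*j+3).factorial : ℕ) : ℤ) * U (j+1+1) (j+2) := by
          simp only [aF]
          rw [show 2*(j+1+1)-2*(j+2) = 0 from by omega, show 2*(j+2)-1 = 2*j+3 from by omega]
          ring
        have R1 : aF (j+1+1) (j+1) =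
            4 * (((2*j+1).factorial : ℕ) : ℤ) * U (j+1+1) (j+1) := by
          simp only [aF]
          rw [show 2*(j+1+1)-2*(j+1) = 2 from by omega, show 2*(j+1)-1 = 2*j+1 from by omega]
          ring
        have hU2 : U (j+1+1) (j+2) = U (j+1) (j+1) + ((j:ℤ)+1+1)^2 * U (j+1) (j+2) :=
          U_rec (j+1) (j+1) (by omega)
        have hU1 : U (j+1+1) (j+1) = U (j+1) j + ((j:ℤ)+1)^2 * U (j+1) (j+1) :=
          U_rec (j+1) j (by omega)
        have hz : U (j+1) (j+2) = 0 := U_eq_zero _ _ (by omega)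
        have hba := hfact j (j+1)
        simp only [stepC, r1, r2]
        rw [A2, A1, A0, R2, R1, hU2, hU1, hz, hcb j]
        push_cast at hba ⊢
        linear_combination (-4 : ℤ) * hba
      · -- j + 2 = n + 2, n = j ≥ 1
        have hj : j = n := by omega
        subst hj
        obtain ⟨i, rfl⟩ : ∃ i, j = i + 1 := ⟨j-1, by omega⟩
        have A2 : aF (i+1) (i+1+2) = 0 := aF_top _ _ (by omega)
        have A1 : aF (i+1) (i+1+1) = 0 := aF_top _ _ (by omega)
        have A0 : aF (i+1) (i+1) = (((2*i+1).factorial : ℕ) : ℤ) * U (i+1) (i+1) := by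
          simp only [aF]
          rw [show 2*(i+1)-2*(i+1) = 0 from by omega, show 2*(i+1)-1 = 2*i+1 from by omega]
          ring
        have R2 : aF (i+1+1) (i+1+2) = 0 := aF_top _ _ (by omega)
        have R1 : aF (i+1+1) (i+1+1) = (((2*i+3).factorial : ℕ) : ℤ) * U (i+1+1) (i+1+1) := by
          simp only [aF]
          rw [show 2*(i+1+1)-2*(i+1+1) = 0 from by omega,
            show 2*(i+1+1)-1 = 2*i+3 from by omega]
          ring
        have hU1 : U (i+1+1) (i+1+1) = U (i+1) (i+1) + (((i:ℤ)+1)+1)^2 * U (i+1) (i+1+1) := by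
          have := U_rec (i+1) (i+1) (by omega)
          push_cast at this ⊢
          exact this
        have hz : U (i+1) (i+1+1) = 0 := U_eq_zero _ _ (by omega)
        have hba := hfact (i+1) (i+1)
        rw [show 2*(i+1)+1 = 2*i+3 from by omega, show 2*(i+1)-1 = 2*i+1 from by omega] at hba
        have hcb' := hcb i
        simp only [stepC, r1, r2]
        rw [A2, A1, A0, R2, R1, hU1, hz]
        push_cast at hba ⊢
        linear_combination (-1 : ℤ) * hba
      · -- j + 2 > n + 2 : everything vanishes
        have A2 : aF n (j+2) = 0 := aF_top _ _ (by omega)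
        have A1 : aF n (j+1) = 0 := aF_top _ _ (by omega)
        have A0 : aF n j = 0 := aF_top _ _ (by omega)
        have R2 : aF (n+1) (j+2) = 0 := aF_top _ _ (by omega)
        have R1 : aF (n+1) (j+1) = 0 := aF_top _ _ (by omega)
        simp only [stepC, r1, r2]
        rw [A2, A1, A0, R2, R1]
        ring

/- ### Insertion of a maximum into a permutation -/

def insFun {m : ℕ} (σ : Equiv.Perm (Fin m)) (p : Fin (m+1)) : Fin (m+1) → Fin (m+1) :=
  p.insertNth (Fin.last m) (fun j => (σ j).castSucc)

lemma insFun_injective {m : ℕ} (σ : Equiv.Perm (Fin m)) (p : Fin (m+1)) :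
    Function.Injective (insFun σ p) := by
  intro i₁ i₂ h
  rcases eq_or_ne i₁ p with h1 | h1 <;> rcases eq_or_ne i₂ p with h2 | h2
  · rw [h1, h2]
  · exfalso
    obtain ⟨j, rfl⟩ := Fin.exists_succAbove_eq h2
    rw [h1] at h
    simp only [insFun, Fin.insertNth_apply_same, Fin.insertNth_apply_succAbove] at h
    exact absurd h.symm (ne_of_lt (Fin.castSucc_lt_last _))
  · exfalso
    obtain ⟨j, rfl⟩ := Fin.exists_succAbove_eq h1
    rw [h2] at h
    simp only [insFun, Fin.insertNth_apply_same, Fin.insertNth_apply_succAbove] at h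
    exact absurd h (ne_of_lt (Fin.castSucc_lt_last _))
  · obtain ⟨j₁, rfl⟩ := Fin.exists_succAbove_eq h1
    obtain ⟨j₂, rfl⟩ := Fin.exists_succAbove_eq h2
    simp only [insFun, Fin.insertNth_apply_succAbove] at h
    rw [σ.injective (Fin.castSucc_injective _ h)]

noncomputable def ins {m : ℕ} (σ : Equiv.Perm (Fin m)) (p : Fin (m+1)) :
    Equiv.Perm (Fin (m+1)) :=
  Equiv.ofBijective (insFun σ p)
    ((Fintype.bijective_iff_injective_and_card _).mpr ⟨insFun_injective σ p, rfl⟩)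

lemma ins_apply {m : ℕ} (σ : Equiv.Perm (Fin m)) (p : Fin (m+1)) (i : Fin (m+1)) :
    ins σ p i = insFun σ p i := rfl

lemma permVal_ins {m : ℕ} (σ : Equiv.Perm (Fin m)) (p : Fin (m+1)) (i : ℕ) (him : i ≤ m) :
    permVal (ins σ p) i =
      if i < (p:ℕ) then permVal σ i else if i = (p:ℕ) then m else permVal σ (i-1) := by
  have hi : i < m + 1 := by omega
  have hv : permVal (ins σ p) i = ((insFun σ p ⟨i, hi⟩ : Fin (m+1)) : ℕ) := by
    rw [permVal, dif_pos hi]; rfl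
  rcases lt_trichotomy i (p:ℕ) with hlt | heq | hgt
  · have hjm : i < m := by
      have := p.isLt; omega
    set j : Fin m := ⟨i, hjm⟩ with hj
    have hs : p.succAbove j = ⟨i, hi⟩ := by
      rw [Fin.succAbove_of_castSucc_lt]
      · rfl
      · rw [Fin.lt_def]; exact hlt
    rw [hv, ← hs, insFun, Fin.insertNth_apply_succAbove]
    rw [if_pos hlt, permVal, dif_pos hjm]
    rfl
  · have : (⟨i, hi⟩ : Fin (m+1)) = p := by
      ext; exact heq
    rw [hv, this, insFun, Fin.insertNth_apply_same]
    rw [if_neg (by omega), if_pos heq]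
    rfl
  · have hjm : i - 1 < m := by omega
    set j : Fin m := ⟨i - 1, hjm⟩ with hj
    have hs : p.succAbove j = ⟨i, hi⟩ := by
      rw [Fin.succAbove_of_le_castSucc]
      · ext; simp [Fin.succ]; have : ((⟨i - 1, hjm⟩ : Fin m) : ℕ) = i - 1 := rfl; omega
      · rw [Fin.le_def]; simp [Fin.castSucc, Fin.castAdd, Fin.castLE]; have : ((⟨i - 1, hjm⟩ : Fin m) : ℕ) = i - 1 := rfl; omega
    rw [hv, ← hs, insFun, Fin.insertNth_apply_succAbove]
    rw [if_neg (by omega), if_neg (by omega), permVal, dif_pos hjm]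
    rfl

lemma ins_bijective (m : ℕ) :
    Function.Bijective (fun sp : Equiv.Perm (Fin m) × Fin (m+1) => ins sp.1 sp.2) := by
  rw [Fintype.bijective_iff_injective_and_card]
  constructor
  · rintro ⟨σ, p⟩ ⟨σ', p'⟩ h
    simp only at h
    have hp : p = p' := by
      have h1 : ins σ p p = Fin.last m := by
        rw [ins_apply]
        simp only [insFun]
        exact Fin.insertNth_apply_same _ _ _
      have h2 : ins σ' p' p = Fin.last m := by rw [← h]; exact h1
      by_contra hne
      obtain ⟨j, rfl⟩ := Fin.exists_succAbove_eq hne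
      rw [ins_apply, insFun, Fin.insertNth_apply_succAbove] at h2
      exact absurd h2 (ne_of_lt (Fin.castSucc_lt_last _))
    subst hp
    have hσ : σ = σ' := by
      apply Equiv.ext
      intro j
      have := congrArg (fun (e : Equiv.Perm (Fin (m+1))) => e (p.succAbove j)) h
      simp only [ins_apply, insFun, Fin.insertNth_apply_succAbove] at this
      exact Fin.castSucc_injective _ this
    rw [hσ]
  · simp [Fintype.card_perm, Nat.factorial_succ, mul_comm]

/- ### Peak sets -/

def pkSet (m : ℕ) (σ : Equiv.Perm (Fin m)) : Finset ℕ :=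
  (Finset.Ioo 0 (m - 1)).filter (fun i =>
    permVal σ (i - 1) < permVal σ i ∧ permVal σ (i + 1) < permVal σ i)

lemma pk_eq_card_PSet (m : ℕ) (σ : Equiv.Perm (Fin m)) : pk m σ = (pkSet m σ).card := rfl

lemma mem_PSet {m : ℕ} {σ : Equiv.Perm (Fin m)} {i : ℕ} :
    i ∈ pkSet m σ ↔ 0 < i ∧ i < m - 1 ∧
      permVal σ (i - 1) < permVal σ i ∧ permVal σ (i + 1) < permVal σ i := by
  simp [pkSet, Finset.mem_filter, Finset.mem_Ioo, and_assoc]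

lemma PSet_no_adj {m : ℕ} {σ : Equiv.Perm (Fin m)} {i : ℕ}
    (h : i ∈ pkSet m σ) : i + 1 ∉ pkSet m σ := by
  rw [mem_PSet] at h
  rw [mem_PSet]
  rintro ⟨-, -, h2, -⟩
  have := h.2.2.2
  simp only [Nat.add_sub_cancel] at h2
  omega

lemma PSet_bounds {m : ℕ} {σ : Equiv.Perm (Fin m)} {i : ℕ} (h : i ∈ pkSet m σ) :
    0 < i ∧ i < m - 1 := ⟨(mem_PSet.mp h).1, (mem_PSet.mp h).2.1⟩

lemma permVal_lt {m : ℕ} (σ : Equiv.Perm (Fin m)) (i : ℕ) (hm : 1 ≤ m) :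
    permVal σ i < m := by
  rw [permVal]
  split
  · exact (σ _).isLt
  · omega

lemma newpeak_iff {m : ℕ} (σ : Equiv.Perm (Fin m)) (p : Fin (m+1)) (q : ℕ)
    (hq1 : 0 < q) (hq2 : q < m) :
    (permVal (ins σ p) (q - 1) < permVal (ins σ p) q ∧
     permVal (ins σ p) (q + 1) < permVal (ins σ p) q) ↔
    ((q + 1 < (p:ℕ) ∧ q ∈ pkSet m σ) ∨ q = (p:ℕ) ∨ ((p:ℕ) + 1 < q ∧ q - 1 ∈ pkSet m σ)) := by
  have hm : 1 ≤ m := by omega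
  have hp : (p:ℕ) ≤ m := by have := p.isLt; omega
  have v1 := permVal_ins σ p (q-1) (by omega)
  have v2 := permVal_ins σ p q (by omega)
  have v3 := permVal_ins σ p (q+1) (by omega)
  rcases (by omega : q + 1 < (p:ℕ) ∨ q + 1 = (p:ℕ) ∨ q = (p:ℕ) ∨ q = (p:ℕ) + 1 ∨ (p:ℕ) + 1 < q)
    with h | h | h | h | h
  · rw [v1, v2, v3, if_pos (show q - 1 < (p:ℕ) by omega), if_pos (show q < (p:ℕ) by omega),
      if_pos h]
    constructor
    · rintro ⟨a, b⟩
      exact Or.inl ⟨h, mem_PSet.mpr ⟨hq1, by omega, a, b⟩⟩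
    · rintro (⟨-, hmem⟩ | h' | ⟨h', -⟩)
      · exact ⟨(mem_PSet.mp hmem).2.2.1, (mem_PSet.mp hmem).2.2.2⟩
      · omega
      · omega
  · rw [v2, v3, if_pos (show q < (p:ℕ) by omega), if_neg (show ¬ (q+1 < (p:ℕ)) by omega),
      if_pos h]
    constructor
    · rintro ⟨-, b⟩
      have := permVal_lt σ q hm
      omega
    · rintro (⟨h', -⟩ | h' | ⟨h', -⟩) <;> omega
  · rw [v1, v2, v3, if_pos (show q - 1 < (p:ℕ) by omega), if_neg (show ¬ (q < (p:ℕ)) by omega),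
      if_pos h, if_neg (show ¬ (q+1 < (p:ℕ)) by omega), if_neg (show ¬ (q+1 = (p:ℕ)) by omega)]
    exact iff_of_true ⟨permVal_lt σ _ hm, permVal_lt σ _ hm⟩ (Or.inr (Or.inl h))
  · rw [v1, v2, if_neg (show ¬ (q - 1 < (p:ℕ)) by omega), if_pos (show q - 1 = (p:ℕ) by omega),
      if_neg (show ¬ (q < (p:ℕ)) by omega), if_neg (show ¬ (q = (p:ℕ)) by omega)]
    constructor
    · rintro ⟨a, -⟩
      have := permVal_lt σ (q-1) hm
      omega
    · rintro (⟨h', -⟩ | h' | ⟨h', -⟩) <;> omega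
  · rw [v1, v2, v3, if_neg (show ¬ (q - 1 < (p:ℕ)) by omega),
      if_neg (show ¬ (q - 1 = (p:ℕ)) by omega),
      if_neg (show ¬ (q < (p:ℕ)) by omega), if_neg (show ¬ (q = (p:ℕ)) by omega),
      if_neg (show ¬ (q + 1 < (p:ℕ)) by omega), if_neg (show ¬ (q + 1 = (p:ℕ)) by omega)]
    have e1 : q + 1 - 1 = q := by omega
    rw [e1]
    constructor
    · rintro ⟨a, b⟩
      refine Or.inr (Or.inr ⟨h, mem_PSet.mpr ⟨by omega, by omega, a, ?_⟩⟩)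
      have e2 : q - 1 + 1 = q := by omega
      rw [e2]
      exact b
    · rintro (⟨h', -⟩ | h' | ⟨-, hmem⟩)
      · omega
      · omega
      · obtain ⟨-, -, a, b⟩ := mem_PSet.mp hmem
        have e2 : q - 1 + 1 = q := by omega
        rw [e2] at b
        exact ⟨a, b⟩

lemma pkSet_ins_eq {m : ℕ} (σ : Equiv.Perm (Fin m)) (p : Fin (m+1)) (hm : 1 ≤ m) :
    pkSet (m+1) (ins σ p) =
      ((pkSet m σ).filter (fun i => i + 1 < (p:ℕ))) ∪
      ((Finset.Ioo 0 m).filter (fun q => q = (p:ℕ))) ∪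
      (((pkSet m σ).filter (fun i => (p:ℕ) < i)).image (· + 1)) := by
  ext q
  simp only [Finset.mem_union, Finset.mem_filter, Finset.mem_image, Finset.mem_Ioo]
  constructor
  · intro hq
    obtain ⟨hq1, hq2, hc⟩ := mem_PSet.mp hq
    have hq2' : q < m := by omega
    rcases (newpeak_iff σ p q hq1 hq2').mp hc with ⟨h1, h2⟩ | h1 | ⟨h1, h2⟩
    · exact Or.inl (Or.inl ⟨h2, h1⟩)
    · exact Or.inl (Or.inr ⟨⟨hq1, hq2'⟩, h1⟩)
    · exact Or.inr ⟨q - 1, ⟨h2, by omega⟩, by omega⟩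
  · intro hq
    have key : 0 < q ∧ q < m ∧
        ((q + 1 < (p:ℕ) ∧ q ∈ pkSet m σ) ∨ q = (p:ℕ) ∨ ((p:ℕ) + 1 < q ∧ q - 1 ∈ pkSet m σ)) := by
      rcases hq with (⟨hmem, hlt⟩ | ⟨⟨a, b⟩, rfl⟩) | ⟨i, ⟨hmem, hlt⟩, rfl⟩
      · have := PSet_bounds hmem
        exact ⟨by omega, by omega, Or.inl ⟨hlt, hmem⟩⟩
      · exact ⟨a, b, Or.inr (Or.inl rfl)⟩
      · have := PSet_bounds hmem
        refine ⟨by omega, by omega, Or.inr (Or.inr ⟨by omega, by simpa using hmem⟩)⟩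
    obtain ⟨h1, h2, h3⟩ := key
    refine mem_PSet.mpr ⟨h1, by omega, (newpeak_iff σ p q h1 h2).mpr h3⟩

lemma pk_ins {m : ℕ} (σ : Equiv.Perm (Fin m)) (hm : 1 ≤ m) (p : Fin (m+1)) :
    pk (m+1) (ins σ p) =
      if (p:ℕ) = 0 ∨ (p:ℕ) = m ∨ (1 ≤ (p:ℕ) ∧ (p:ℕ) - 1 ∈ pkSet m σ) ∨ (p:ℕ) ∈ pkSet m σ
      then pk m σ else pk m σ + 1 := by
  have hp : (p:ℕ) ≤ m := by have := p.isLt; omega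
  set pn := (p:ℕ) with hpn
  set k := pk m σ with hk
  -- cardinalities
  rw [pk_eq_card_PSet, pkSet_ins_eq σ p hm]
  have hdisj1 : Disjoint ((pkSet m σ).filter (fun i => i + 1 < pn))
      ((Finset.Ioo 0 m).filter (fun q => q = pn)) := by
    rw [Finset.disjoint_left]
    intro a ha hb
    simp only [Finset.mem_filter] at ha hb
    omega
  have hdisj2 : Disjoint (((pkSet m σ).filter (fun i => i + 1 < pn)) ∪
      ((Finset.Ioo 0 m).filter (fun q => q = pn)))
      (((pkSet m σ).filter (fun i => pn < i)).image (· + 1)) := by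
    rw [Finset.disjoint_left]
    intro a ha hb
    simp only [Finset.mem_union, Finset.mem_filter, Finset.mem_image] at ha hb
    obtain ⟨i, ⟨-, hlt⟩, rfl⟩ := hb
    rcases ha with ⟨-, h⟩ | ⟨-, h⟩ <;> omega
  rw [Finset.card_union_of_disjoint hdisj2, Finset.card_union_of_disjoint hdisj1]
  have hC : (((pkSet m σ).filter (fun i => pn < i)).image (· + 1)).card =
      ((pkSet m σ).filter (fun i => pn < i)).card :=
    Finset.card_image_of_injective _ (add_left_injective 1)
  rw [hC]
  -- partition of k
  have h1 : ((pkSet m σ).filter (fun i => i + 1 < pn)).card +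
      ((pkSet m σ).filter (fun i => ¬ (i + 1 < pn))).card = k :=
    Finset.card_filter_add_card_filter_not _
  have h2 : (((pkSet m σ).filter (fun i => ¬ (i + 1 < pn))).filter (fun i => pn < i)).card +
      (((pkSet m σ).filter (fun i => ¬ (i + 1 < pn))).filter (fun i => ¬ (pn < i))).card =
      ((pkSet m σ).filter (fun i => ¬ (i + 1 < pn))).card :=
    Finset.card_filter_add_card_filter_not _
  have h3 : ((pkSet m σ).filter (fun i => ¬ (i + 1 < pn))).filter (fun i => pn < i) =
      (pkSet m σ).filter (fun i => pn < i) := by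
    rw [Finset.filter_filter]
    apply Finset.filter_congr
    intro x hx
    constructor
    · rintro ⟨-, h⟩; exact h
    · intro h; exact ⟨by omega, h⟩
  rw [h3] at h2
  -- the middle set M
  set M := ((pkSet m σ).filter (fun i => ¬ (i + 1 < pn))).filter (fun i => ¬ (pn < i)) with hM
  have hMmem : ∀ i, i ∈ M ↔ i ∈ pkSet m σ ∧ pn ≤ i + 1 ∧ i ≤ pn := by
    intro i
    simp only [hM, Finset.mem_filter]
    constructor
    · rintro ⟨⟨a, b⟩, c⟩; exact ⟨a, by omega, by omega⟩
    · rintro ⟨a, b, c⟩; exact ⟨⟨a, by omega⟩, by omega⟩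
  have hMcard : M.card = if (1 ≤ pn ∧ pn - 1 ∈ pkSet m σ) ∨ pn ∈ pkSet m σ then 1 else 0 := by
    split_ifs with hcond
    · rcases Decidable.em (pn ∈ pkSet m σ) with hin | hout
      · have : M = {pn} := by
          ext i
          rw [hMmem, Finset.mem_singleton]
          constructor
          · rintro ⟨a, b, c⟩
            rcases (by omega : i = pn ∨ (i + 1 = pn ∧ 1 ≤ pn)) with h | ⟨h, h'⟩
            · exact h
            · exfalso
              apply PSet_no_adj a
              rw [h]
              exact hin
          · rintro rfl
            exact ⟨hin, by omega, le_refl _⟩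
        rw [this, Finset.card_singleton]
      · obtain ⟨hpn1, hin⟩ : 1 ≤ pn ∧ pn - 1 ∈ pkSet m σ := by tauto
        have : M = {pn - 1} := by
          ext i
          rw [hMmem, Finset.mem_singleton]
          constructor
          · rintro ⟨a, b, c⟩
            rcases (by omega : i = pn ∨ (i = pn - 1)) with h | h
            · exact absurd (h ▸ a) hout
            · exact h
          · rintro rfl
            exact ⟨hin, by omega, by omega⟩
        rw [this, Finset.card_singleton]
    · have : M = ∅ := by
        rw [Finset.eq_empty_iff_forall_notMem]
        intro i hi
        obtain ⟨a, b, c⟩ := (hMmem i).mp hi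
        rcases (by omega : i = pn ∨ (i + 1 = pn ∧ 1 ≤ pn)) with h | ⟨h, h'⟩
        · exact hcond (Or.inr (h ▸ a))
        · exact hcond (Or.inl ⟨h', by rw [show pn - 1 = i by omega]; exact a⟩)
      rw [this, Finset.card_empty]
  -- the singleton set B
  have hBcard : ((Finset.Ioo 0 m).filter (fun q => q = pn)).card =
      if 0 < pn ∧ pn < m then 1 else 0 := by
    have : (Finset.Ioo 0 m).filter (fun q => q = pn) = (Finset.Ioo 0 m).filter (Eq pn) := by
      apply Finset.filter_congr
      intro x hx
      constructor <;> (intro h; omega)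
    rw [this, Finset.filter_eq]
    split_ifs with h h' h'
    · rw [Finset.card_singleton]
    · exact absurd (Finset.mem_Ioo.mp h) h'
    · exact absurd (Finset.mem_Ioo.mpr ⟨h'.1, h'.2⟩) h
    · rw [Finset.card_empty]
  rw [hBcard]
  -- assemble
  rw [← h1, ← h2, hMcard]
  rcases Decidable.em (pn ∈ pkSet m σ) with hin | hin
  · have hb := PSet_bounds hin
    rw [if_pos (show (1 ≤ pn ∧ pn - 1 ∈ pkSet m σ) ∨ pn ∈ pkSet m σ from Or.inr hin),
      if_pos (show pn = 0 ∨ pn = m ∨ (1 ≤ pn ∧ pn - 1 ∈ pkSet m σ) ∨ pn ∈ pkSet m σ from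
        Or.inr (Or.inr (Or.inr hin))),
      if_pos (show 0 < pn ∧ pn < m by omega)]
    omega
  · rcases Decidable.em (pn - 1 ∈ pkSet m σ) with hin' | hin'
    · have hb := PSet_bounds hin'
      rw [if_pos (show (1 ≤ pn ∧ pn - 1 ∈ pkSet m σ) ∨ pn ∈ pkSet m σ from
          Or.inl ⟨by omega, hin'⟩),
        if_pos (show pn = 0 ∨ pn = m ∨ (1 ≤ pn ∧ pn - 1 ∈ pkSet m σ) ∨ pn ∈ pkSet m σ from
          Or.inr (Or.inr (Or.inl ⟨by omega, hin'⟩))),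
        if_pos (show 0 < pn ∧ pn < m by omega)]
      omega
    · rw [if_neg (show ¬ ((1 ≤ pn ∧ pn - 1 ∈ pkSet m σ) ∨ pn ∈ pkSet m σ) by
        rintro (⟨-, h⟩ | h) <;> [exact hin' h; exact hin h])]
      rcases (by omega : pn = 0 ∨ pn = m ∨ (0 < pn ∧ pn < m)) with h0 | h0 | h0
      · rw [if_pos (show pn = 0 ∨ pn = m ∨ (1 ≤ pn ∧ pn - 1 ∈ pkSet m σ) ∨ pn ∈ pkSet m σ from
            Or.inl h0), if_neg (show ¬ (0 < pn ∧ pn < m) by omega)]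
        omega
      · rw [if_pos (show pn = 0 ∨ pn = m ∨ (1 ≤ pn ∧ pn - 1 ∈ pkSet m σ) ∨ pn ∈ pkSet m σ from
            Or.inr (Or.inl h0)), if_neg (show ¬ (0 < pn ∧ pn < m) by omega)]
        omega
      · rw [if_pos (show 0 < pn ∧ pn < m from h0),
          if_neg (show ¬ (pn = 0 ∨ pn = m ∨ (1 ≤ pn ∧ pn - 1 ∈ pkSet m σ) ∨
            pn ∈ pkSet m σ) by
          rintro (h | h | ⟨-, h⟩ | h)
          · omega
          · omega
          · exact hin' h
          · exact hin h)]
        omega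

lemma card_D {m : ℕ} (σ : Equiv.Perm (Fin m)) (hm : 1 ≤ m) :
    ((Finset.range (m+1)).filter (fun pn => pn = 0 ∨ pn = m ∨
      (1 ≤ pn ∧ pn - 1 ∈ pkSet m σ) ∨ pn ∈ pkSet m σ)).card = 2 * pk m σ + 2 := by
  have hset : (Finset.range (m+1)).filter (fun pn => pn = 0 ∨ pn = m ∨
      (1 ≤ pn ∧ pn - 1 ∈ pkSet m σ) ∨ pn ∈ pkSet m σ) =
      ({0, m} : Finset ℕ) ∪ (pkSet m σ).biUnion (fun i => ({i, i+1} : Finset ℕ)) := by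
    ext q
    simp only [Finset.mem_filter, Finset.mem_range, Finset.mem_union, Finset.mem_insert,
      Finset.mem_singleton, Finset.mem_biUnion]
    constructor
    · rintro ⟨hq, h | h | ⟨h1, h2⟩ | h⟩
      · exact Or.inl (Or.inl h)
      · exact Or.inl (Or.inr h)
      · exact Or.inr ⟨q - 1, h2, Or.inr (by omega)⟩
      · exact Or.inr ⟨q, h, Or.inl rfl⟩
    · rintro ((rfl | rfl) | ⟨i, hi, rfl | rfl⟩)
      · exact ⟨by omega, Or.inl rfl⟩
      · exact ⟨by omega, Or.inr (Or.inl rfl)⟩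
      · have := PSet_bounds hi
        exact ⟨by omega, Or.inr (Or.inr (Or.inr hi))⟩
      · have := PSet_bounds hi
        refine ⟨by omega, Or.inr (Or.inr (Or.inl ⟨by omega, by simpa using hi⟩))⟩
  rw [hset]
  have hd : Disjoint ({0, m} : Finset ℕ)
      ((pkSet m σ).biUnion (fun i => ({i, i+1} : Finset ℕ))) := by
    rw [Finset.disjoint_left]
    intro a ha hb
    simp only [Finset.mem_insert, Finset.mem_singleton] at ha
    simp only [Finset.mem_biUnion, Finset.mem_insert, Finset.mem_singleton] at hb
    obtain ⟨i, hi, h⟩ := hb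
    have := PSet_bounds hi
    omega
  rw [Finset.card_union_of_disjoint hd]
  have hc1 : ({0, m} : Finset ℕ).card = 2 := by
    rw [Finset.card_insert_of_notMem (by simp; omega), Finset.card_singleton]
  have hc2 : ((pkSet m σ).biUnion (fun i => ({i, i+1} : Finset ℕ))).card = 2 * pk m σ := by
    rw [Finset.card_biUnion]
    · rw [Finset.sum_congr rfl (fun i _ => show ({i, i+1} : Finset ℕ).card = 2 from by
        rw [Finset.card_insert_of_notMem (by simp), Finset.card_singleton])]
      rw [Finset.sum_const, smul_eq_mul, pk_eq_card_PSet]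
      omega
    · intro x hx y hy hne
      rw [Function.onFun, Finset.disjoint_left]
      intro a ha hb
      simp only [Finset.mem_insert, Finset.mem_singleton] at ha hb
      rcases (by omega : y = x + 1 ∨ x = y + 1) with h | h
      · exact PSet_no_adj hx (h ▸ hy)
      · exact PSet_no_adj hy (h ▸ hx)
  rw [hc1, hc2]
  omega

lemma sum_ins {m : ℕ} (σ : Equiv.Perm (Fin m)) (hm : 1 ≤ m) :
    (∑ p : Fin (m+1), (X : Polynomial ℤ) ^ pk (m+1) (ins σ p) =
      (2 * pk m σ + 2) • (X : Polynomial ℤ) ^ pk m σ +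
      (m + 1 - (2 * pk m σ + 2)) • (X : Polynomial ℤ) ^ (pk m σ + 1)) ∧
      2 * pk m σ + 2 ≤ m + 1 := by
  set k := pk m σ with hkdef
  have h1 : ∀ p : Fin (m+1), (X : Polynomial ℤ) ^ pk (m+1) (ins σ p) =
      (fun pn : ℕ => if pn = 0 ∨ pn = m ∨ (1 ≤ pn ∧ pn - 1 ∈ pkSet m σ) ∨ pn ∈ pkSet m σ
        then (X : Polynomial ℤ) ^ k else (X : Polynomial ℤ) ^ (k+1)) ((p : Fin (m+1)) : ℕ) := by
    intro p
    rw [pk_ins σ hm p]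
    exact apply_ite (fun t => (X : Polynomial ℤ) ^ t) _ _ _
  have hcard := card_D σ hm
  have hcard' : ((Finset.range (m+1)).filter (fun pn => ¬ (pn = 0 ∨ pn = m ∨
      (1 ≤ pn ∧ pn - 1 ∈ pkSet m σ) ∨ pn ∈ pkSet m σ))).card = (m + 1) - (2 * k + 2) := by
    have := Finset.card_filter_add_card_filter_not (s := Finset.range (m+1))
      (fun pn => pn = 0 ∨ pn = m ∨ (1 ≤ pn ∧ pn - 1 ∈ pkSet m σ) ∨ pn ∈ pkSet m σ)
    rw [hcard, Finset.card_range] at this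
    omega
  have hle : 2 * k + 2 ≤ m + 1 := by
    have := Finset.card_filter_le (Finset.range (m+1)) (fun pn => pn = 0 ∨ pn = m ∨
      (1 ≤ pn ∧ pn - 1 ∈ pkSet m σ) ∨ pn ∈ pkSet m σ)
    rw [hcard, Finset.card_range] at this
    exact this
  refine ⟨?_, hle⟩
  calc ∑ p : Fin (m+1), (X : Polynomial ℤ) ^ pk (m+1) (ins σ p)
      = ∑ p : Fin (m+1), (fun pn : ℕ =>
          if pn = 0 ∨ pn = m ∨ (1 ≤ pn ∧ pn - 1 ∈ pkSet m σ) ∨ pn ∈ pkSet m σ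
          then (X : Polynomial ℤ) ^ k else (X : Polynomial ℤ) ^ (k+1)) ((p : Fin (m+1)) : ℕ) :=
        Finset.sum_congr rfl (fun p _ => h1 p)
    _ = ∑ pn ∈ Finset.range (m+1),
          (if pn = 0 ∨ pn = m ∨ (1 ≤ pn ∧ pn - 1 ∈ pkSet m σ) ∨ pn ∈ pkSet m σ
          then (X : Polynomial ℤ) ^ k else (X : Polynomial ℤ) ^ (k+1)) :=
        Fin.sum_univ_eq_sum_range (fun pn : ℕ =>
          if pn = 0 ∨ pn = m ∨ (1 ≤ pn ∧ pn - 1 ∈ pkSet m σ) ∨ pn ∈ pkSet m σ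
          then (X : Polynomial ℤ) ^ k else (X : Polynomial ℤ) ^ (k+1)) (m+1)
    _ = (2 * k + 2) • (X : Polynomial ℤ) ^ k +
          (m + 1 - (2 * k + 2)) • (X : Polynomial ℤ) ^ (k + 1) := by
        rw [Finset.sum_ite, Finset.sum_const, Finset.sum_const, hcard, hcard']

lemma per_sigma (m k : ℕ) (h2k : 2*k+2 ≤ m+1) :
    (2*k+2) • (X : Polynomial ℤ)^k + (m+1 - (2*k+2)) • (X : Polynomial ℤ)^(k+1) =
    (C 2 + C ((m:ℤ)-1) * X) * X^k + C 2 * (X * (1-X) * derivative ((X : Polynomial ℤ)^k)) := by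
  rw [derivative_X_pow, nsmul_eq_mul, nsmul_eq_mul, Nat.cast_sub h2k]
  simp only [map_sub, map_one, map_natCast, map_ofNat]
  cases k with
  | zero => push_cast; ring
  | succ i =>
    rw [show i+1-1 = i from rfl]
    push_cast
    ring

lemma P_rec (m : ℕ) (hm : 1 ≤ m) :
    Ppoly (m+1) = (C 2 + C ((m:ℤ)-1) * X) * Ppoly m +
      C 2 * (X * (1 - X) * derivative (Ppoly m)) := by
  have h0 : Ppoly (m+1) = ∑ σ : Equiv.Perm (Fin m), ∑ p : Fin (m+1),
      (X : Polynomial ℤ) ^ pk (m+1) (ins σ p) := by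
    rw [Ppoly, ← Fintype.sum_bijective _ (ins_bijective m)
      (fun sp => X ^ pk (m+1) (ins sp.1 sp.2)) (fun π => X ^ pk (m+1) π) (fun sp => rfl)]
    exact Fintype.sum_prod_type _
  rw [h0, Finset.sum_congr rfl (fun σ _ =>
    ((sum_ins σ hm).1).trans (per_sigma m (pk m σ) (sum_ins σ hm).2))]
  rw [Ppoly, Finset.sum_add_distrib, derivative_sum]
  simp only [Finset.mul_sum]

lemma G_rec (m : ℕ) (hm : 1 ≤ m) :
    X * Ppoly (m+1) = C ((m:ℤ)+1) * X * (X * Ppoly m) +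
      C 2 * (X * (1 - X) * derivative (X * Ppoly m)) := by
  have h := P_rec m hm
  have hd : derivative (X * Ppoly m) = Ppoly m + X * derivative (Ppoly m) := by
    rw [derivative_mul, derivative_X, one_mul]
  rw [hd, h]
  simp only [map_sub, map_add, map_one, map_natCast, map_ofNat]
  ring

lemma Ppoly_one : Ppoly 1 = 1 := by
  rw [Ppoly]
  have h : ∀ π : Equiv.Perm (Fin 1), pk 1 π = 0 := by
    intro π
    rw [pk]
    simp
  rw [Finset.sum_congr rfl (fun π _ => by rw [h π, pow_zero])]
  simp

lemma main_ind (n : ℕ) (hn : 1 ≤ n) : X * Ppoly (2*n-1) = S n (aF n) := by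
  induction n, hn using Nat.le_induction with
  | base =>
    rw [show 2*1-1 = 1 from rfl, Ppoly_one, mul_one, S]
    rw [Finset.sum_range_succ, Finset.sum_range_succ, Finset.sum_range_zero]
    rw [aF_zero]
    simp only [map_zero, zero_mul, zero_add, pow_one, pow_zero, mul_one]
    have : aF 1 1 = 1 := by
      simp [aF, U]
    rw [this, map_one, one_mul, show (1:ℕ)-1 = 0 from rfl, pow_zero, mul_one]
  | succ n hn ih =>
    have hstep0 : stepC (2*n) n (aF n) 0 = 0 := by
      simp [stepC, aF_zero]
    have hstept : stepC (2*n) n (aF n) (n+2) = 0 := by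
      simp [stepC, aF_top n (n+1) (by omega), aF_top n (n+2) (by omega)]
    have g1 := G_rec (2*n-1) (by omega)
    rw [show 2*n-1+1 = 2*n from by omega, ih,
      show (((2*n-1 : ℕ):ℤ)+1) = (((2*n : ℕ)):ℤ) from by push_cast; omega] at g1
    rw [S_step (2*n) n (aF n) (aF_zero n) (aF_top n (n+1) (by omega))] at g1
    have g2 := G_rec (2*n) (by omega)
    rw [g1, show (((2*n : ℕ):ℤ)+1) = (((2*n+1 : ℕ)):ℤ) from by push_cast; ring] at g2
    rw [S_step (2*n+1) (n+1) (stepC (2*n) n (aF n)) hstep0 hstept] at g2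
    rw [show 2*(n+1)-1 = 2*n+1 from by omega, g2,
      S_pad (n+1) (aF (n+1)) (aF_zero (n+1)) (aF_top (n+1) (n+2) (by omega)), S, S]
    exact Finset.sum_congr rfl (fun j _ => by rw [key_coeff n hn j])

/-- For `n ≥ 1`, `x P_{2n-1}(x) = Σ_{j=1}^n 2^{2n-2j} (2j-1)! U(n,j) x^j (1-x)^{n-j}` in `ℤ[x]`. -/
theorem stmt5 (n : ℕ) (hn : 1 ≤ n) :
    Polynomial.X * Ppoly (2 * n - 1) =
      ∑ j ∈ Finset.Icc 1 n,
        Polynomial.C ((2 : ℤ) ^ (2 * n - 2 * j) * ((2 * j - 1).factorial : ℤ) * U n j) *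
          Polynomial.X ^ j * (1 - Polynomial.X) ^ (n - j) := by
  rw [main_ind n hn, S]
  refine (Finset.sum_subset ?_ ?_).symm
  · intro x hx
    simp only [Finset.mem_Icc] at hx
    simp only [Finset.mem_range]
    omega
  · intro x hx hx'
    simp only [Finset.mem_range] at hx
    simp only [Finset.mem_Icc] at hx'
    have : x = 0 := by omega
    rw [this, aF_zero, map_zero, zero_mul, zero_mul]
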